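/- For every λ > 1 and every integer n ≥ 1, m_{2n}(λ) = (λ^{4n} − 1)^{−1} · Σ_{j=0}^{n−1} C(2n, 2j) · m_{2j}(λ) · Σ_{l=0}^{n−j} C(2(n−j), 2l) · λ^{2l}. -/

import Mathlib

/-!
Write `S(λ) = λ⁻¹ (X₀ + S')` with `S' = ∑ λ^{-(n+1)} X_{n+1}`. Then `S'` is independent of `X₀` and
has the same moments as `S(λ)`, so the binomial theorem together with `E[X₀^i] = [i even]` gives
`λ^{2k} m_{2k} = ∑_{j ≤ k} C(2k,2j) m_{2j}`. Substituting this recursion into itself once and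
regrouping with `C(2n,2k) C(2k,2j) = C(2n,2j) C(2(n-j),2(n-k))` yields
`λ^{4n} m_{2n} = ∑_{j ≤ n} C(2n,2j) m_{2j} ∑_{i ≤ n-j} C(2(n-j),2i) λ^{2i}`, whose `j = n` term is
`m_{2n}`; solving for `m_{2n}` gives the formula.

That `S'` and `S(λ)` have the same moments is seen on partial sums: their moments obey the same
recursion, hence do not depend on the index at which the sum starts, and they converge to those of
the series by dominated convergence, everything being bounded by `(1 - λ⁻¹)⁻¹`.
-/

open MeasureTheory ProbabilityTheory Finset Filter Topology

section Rademacher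

variable {Ω : Type*} [MeasurableSpace Ω] {P : Measure Ω} [IsProbabilityMeasure P] {Y : Ω → ℝ}

lemma ae_eq_one_or_eq_neg_one (hY : Measurable Y) (h1 : P {ω | Y ω = 1} = 1 / 2)
    (h2 : P {ω | Y ω = -1} = 1 / 2) : ∀ᵐ ω ∂P, Y ω = 1 ∨ Y ω = -1 := by
  have hdisj : Disjoint {ω | Y ω = 1} {ω | Y ω = -1} :=
    Set.disjoint_left.2 fun ω (h : Y ω = 1) (h' : Y ω = -1) => by linarith
  have hunion : P ({ω | Y ω = 1} ∪ {ω | Y ω = -1}) = 1 := by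
    rw [measure_union hdisj (hY (measurableSet_singleton _)), h1, h2, ENNReal.add_halves]
  exact ae_iff.2 ((prob_compl_eq_zero_iff
    ((hY (measurableSet_singleton _)).union (hY (measurableSet_singleton _)))).2 hunion)

lemma integral_eq_zero_of_rademacher (hY : Measurable Y) (h1 : P {ω | Y ω = 1} = 1 / 2)
    (h2 : P {ω | Y ω = -1} = 1 / 2) : ∫ ω, Y ω ∂P = 0 := by
  have hA : MeasurableSet {ω | Y ω = 1} := hY (measurableSet_singleton 1)
  have hY' : Y =ᵐ[P] fun ω => 2 * {ω | Y ω = 1}.indicator 1 ω - 1 := by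
    filter_upwards [ae_eq_one_or_eq_neg_one hY h1 h2] with ω h
    rcases h with h | h <;> simp [Set.indicator_apply, h] <;> norm_num
  rw [integral_congr_ae hY', integral_sub ((integrable_indicator_iff hA).2
    (integrable_const _).integrableOn |>.const_mul 2) (integrable_const _),
    integral_const_mul, integral_indicator_one hA, measureReal_def, h1]
  simp

lemma integral_pow_of_rademacher (hY : Measurable Y) (h1 : P {ω | Y ω = 1} = 1 / 2)
    (h2 : P {ω | Y ω = -1} = 1 / 2) (k : ℕ) :
    ∫ ω, Y ω ^ k ∂P = if Even k then 1 else 0 := by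
  split_ifs with hk
  · have : (fun ω => Y ω ^ k) =ᵐ[P] fun _ => 1 := by
      filter_upwards [ae_eq_one_or_eq_neg_one hY h1 h2] with ω h
      rcases h with h | h <;> simp [h, hk.neg_one_pow]
    simp [integral_congr_ae this]
  · have : (fun ω => Y ω ^ k) =ᵐ[P] Y := by
      filter_upwards [ae_eq_one_or_eq_neg_one hY h1 h2] with ω h
      rcases h with h | h <;> simp [h, (Nat.not_even_iff_odd.1 hk).neg_one_pow]
    rw [integral_congr_ae this, integral_eq_zero_of_rademacher hY h1 h2]

end Rademacher

section TailPartialSum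

variable {Ω : Type*} {X : ℕ → Ω → ℝ} {r : ℝ}

/-- With `r = λ⁻¹` and `s = 0` these are the partial sums of `S(λ)`. -/
noncomputable def tailPartialSum (X : ℕ → Ω → ℝ) (r : ℝ) (s N : ℕ) (ω : Ω) : ℝ :=
  ∑ t ∈ range N, r ^ (t + 1) * X (t + s) ω

lemma tailPartialSum_succ (s N : ℕ) (ω : Ω) :
    tailPartialSum X r s (N + 1) ω = r * (tailPartialSum X r (s + 1) N ω + X s ω) := by
  rw [tailPartialSum, tailPartialSum, sum_range_succ', mul_add, mul_sum]
  refine congrArg₂ _ (sum_congr rfl fun t _ => ?_) (by simp)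
  rw [show t + 1 + s = t + (s + 1) by omega]
  ring

lemma abs_pow_succ_mul_le {r x : ℝ} (hr0 : 0 ≤ r) (hr1 : r ≤ 1) (hx : |x| ≤ 1) (t : ℕ) :
    |r ^ (t + 1) * x| ≤ r ^ t := by
  rw [abs_mul, abs_of_nonneg (by positivity)]
  exact (mul_le_of_le_one_right (by positivity) hx).trans (pow_le_pow_of_le_one hr0 hr1 t.le_succ)

lemma abs_tailPartialSum_le (hr0 : 0 ≤ r) (hr1 : r < 1) {ω : Ω} (hω : ∀ t, |X t ω| ≤ 1)
    (s N : ℕ) : |tailPartialSum X r s N ω| ≤ (1 - r)⁻¹ :=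
  calc |tailPartialSum X r s N ω|
      ≤ ∑ t ∈ range N, |r ^ (t + 1) * X (t + s) ω| := abs_sum_le_sum_abs _ _
    _ ≤ ∑ t ∈ range N, r ^ t := by
        gcongr with t
        exact abs_pow_succ_mul_le hr0 hr1.le (hω _) t
    _ ≤ (1 - r)⁻¹ := by
        rw [range_eq_Ico]
        simpa using geom_sum_Ico_le_of_lt_one (m := 0) (n := N) hr0 hr1

variable [MeasurableSpace Ω] {P : Measure Ω}

lemma measurable_tailPartialSum (hX : ∀ n, Measurable (X n)) (s N : ℕ) :
    Measurable (tailPartialSum X r s N) :=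
  measurable_sum _ fun t _ => (hX (t + s)).const_mul _

lemma indepFun_tailPartialSum (hX : ∀ n, Measurable (X n)) (hindep : iIndepFun X P)
    (s N : ℕ) : IndepFun (tailPartialSum X r (s + 1) N) (X s) P := by
  have hY : iIndepFun (fun j ω => r ^ (j - s) * X j ω) P :=
    hindep.comp (fun j x => r ^ (j - s) * x) fun j => measurable_const_mul _
  have key := hY.indepFun_finsetSum_of_notMem (fun j => (hX j).const_mul _)
    (s := Ico (s + 1) (s + 1 + N)) (i := s) (by simp)
  convert key using 1
  · ext ω
    rw [tailPartialSum, Finset.sum_apply, sum_Ico_eq_sum_range]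
    refine sum_congr (by simp) fun t _ => ?_
    congr 2 <;> omega
  · simp

lemma integrable_pow_of_ae_abs_le [IsFiniteMeasure P] {f : Ω → ℝ} (hf : Measurable f) {C : ℝ}
    (hC : ∀ᵐ ω ∂P, |f ω| ≤ C) (k : ℕ) : Integrable (fun ω => f ω ^ k) P :=
  .of_bound (hf.pow_const k).aestronglyMeasurable (C ^ k) <| hC.mono fun ω hω => by
    rw [norm_pow, Real.norm_eq_abs]
    exact pow_le_pow_left₀ (abs_nonneg _) hω k

lemma integral_tailPartialSum_succ_pow [IsFiniteMeasure P] (hX : ∀ n, Measurable (X n))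
    (hindep : iIndepFun X P) (hbdd : ∀ᵐ ω ∂P, ∀ t, |X t ω| ≤ 1) (hr0 : 0 ≤ r) (hr1 : r < 1)
    (s N k : ℕ) :
    ∫ ω, tailPartialSum X r s (N + 1) ω ^ k ∂P = r ^ k * ∑ i ∈ range (k + 1), (k.choose i : ℝ) *
      ((∫ ω, tailPartialSum X r (s + 1) N ω ^ i ∂P) * ∫ ω, X s ω ^ (k - i) ∂P) := by
  have hQ := measurable_tailPartialSum (r := r) hX (s + 1) N
  have hQ_int := integrable_pow_of_ae_abs_le hQ
    (hbdd.mono fun ω hω => abs_tailPartialSum_le hr0 hr1 hω (s + 1) N)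
  have hXs_int := integrable_pow_of_ae_abs_le (hX s) (hbdd.mono fun ω hω => hω s)
  have hindep_pow (i j : ℕ) : IndepFun (fun ω => tailPartialSum X r (s + 1) N ω ^ i)
      (fun ω => X s ω ^ j) P := (indepFun_tailPartialSum hX hindep s N).comp
    (measurable_id.pow_const i) (measurable_id.pow_const j)
  simp_rw [tailPartialSum_succ, mul_pow, add_pow]
  rw [integral_const_mul, integral_finsetSum (f := fun i ω =>
      tailPartialSum X r (s + 1) N ω ^ i * X s ω ^ (k - i) * (k.choose i : ℝ)) _ fun i _ =>
    ((hindep_pow i (k - i)).integrable_mul (hQ_int i) (hXs_int (k - i))).mul_const _]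
  refine congrArg _ (sum_congr rfl fun i _ => ?_)
  rw [integral_mul_const, (hindep_pow i (k - i)).integral_fun_mul_eq_mul_integral
    (hQ_int i).aestronglyMeasurable (hXs_int (k - i)).aestronglyMeasurable]
  ring

lemma tendsto_integral_tailPartialSum_pow [IsFiniteMeasure P] (hX : ∀ n, Measurable (X n))
    (hbdd : ∀ᵐ ω ∂P, ∀ t, |X t ω| ≤ 1) (hr0 : 0 ≤ r) (hr1 : r < 1) (k : ℕ) :
    Tendsto (fun N => ∫ ω, tailPartialSum X r 0 N ω ^ k ∂P) atTop
      (𝓝 (∫ ω, (∑' t, r ^ (t + 1) * X t ω) ^ k ∂P)) := by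
  refine tendsto_integral_of_dominated_convergence (fun _ => (1 - r)⁻¹ ^ k)
    (fun N => ((measurable_tailPartialSum hX 0 N).pow_const k).aestronglyMeasurable)
    (integrable_const _) (fun N => hbdd.mono fun ω hω => ?_) (hbdd.mono fun ω hω => ?_)
  · rw [norm_pow, Real.norm_eq_abs]
    exact pow_le_pow_left₀ (abs_nonneg _) (abs_tailPartialSum_le hr0 hr1 hω 0 N) k
  · have hsum : Summable fun t => r ^ (t + 1) * X t ω :=
      (summable_geometric_of_lt_one hr0 hr1).of_norm_bounded fun t =>
        (Real.norm_eq_abs _).trans_le (abs_pow_succ_mul_le hr0 hr1.le (hω t) t)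
    simpa [tailPartialSum] using hsum.hasSum.tendsto_sum_nat.pow k

end TailPartialSum

section Combinatorics

lemma sum_range_two_mul_add_one_ite_even {M : Type*} [AddCommMonoid M] (f : ℕ → M) (k : ℕ) :
    ∑ i ∈ range (2 * k + 1), (if Even i then f i else 0) = ∑ j ∈ range (k + 1), f (2 * j) := by
  induction k with
  | zero => simp
  | succ k ih =>
    rw [show 2 * (k + 1) + 1 = 2 * k + 1 + 1 + 1 by ring, sum_range_succ, sum_range_succ, ih,
      sum_range_succ _ (k + 1), if_neg (by simp [parity_simps]), if_pos ⟨k + 1, by ring⟩,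
      show 2 * k + 1 + 1 = 2 * (k + 1) by ring, add_zero]

lemma choose_two_mul_mul_choose_two_mul {n k j : ℕ} (hjk : j ≤ k) (hkn : k ≤ n) :
    (2 * n).choose (2 * k) * (2 * k).choose (2 * j)
      = (2 * n).choose (2 * j) * (2 * (n - j)).choose (2 * (n - k)) := by
  rw [Nat.choose_mul (by omega), show 2 * n - 2 * j = 2 * (n - j) by omega,
    show 2 * k - 2 * j = 2 * (k - j) by omega]
  exact congrArg _ (Nat.choose_symm_of_eq_add (by omega))

variable {R : Type*} [CommSemiring R]

lemma sum_choose_two_mul_sum_choose_two_mul (a : R) (f : ℕ → R) (n : ℕ) :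
    ∑ k ∈ range (n + 1), ((2 * n).choose (2 * k) : R) * a ^ (2 * (n - k)) *
        ∑ j ∈ range (k + 1), ((2 * k).choose (2 * j) : R) * f j
      = ∑ j ∈ range (n + 1), ((2 * n).choose (2 * j) : R) * f j *
        ∑ i ∈ range (n - j + 1), ((2 * (n - j)).choose (2 * i) : R) * a ^ (2 * i) := by
  simp_rw [mul_sum]
  rw [sum_sigma', sum_sigma']
  refine sum_nbij' (fun x => ⟨x.2, n - x.1⟩) (fun x => ⟨n - x.2, x.1⟩) ?_ ?_ ?_ ?_ ?_
  iterate 4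
    rintro ⟨x, y⟩ h
    simp only [mem_sigma, mem_range, Sigma.mk.injEq, heq_eq_eq, and_true, true_and] at h ⊢
    omega
  rintro ⟨k, j⟩ hkj
  simp only [mem_sigma, mem_range] at hkj
  dsimp only
  have hchoose := congrArg (Nat.cast (R := R))
    (choose_two_mul_mul_choose_two_mul (n := n) (show j ≤ k by omega) (by omega))
  push_cast at hchoose
  calc _ = ((2 * n).choose (2 * k) * (2 * k).choose (2 * j) : R) * a ^ (2 * (n - k)) * f j := by
        ring
    _ = _ := by rw [hchoose]; ring

lemma pow_four_mul_mul_eq_of_pow_two_mul_mul_eq {a : R} {f : ℕ → R}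
    (hf : ∀ k, a ^ (2 * k) * f k = ∑ j ∈ range (k + 1), ((2 * k).choose (2 * j) : R) * f j)
    (n : ℕ) :
    a ^ (4 * n) * f n = ∑ j ∈ range (n + 1), ((2 * n).choose (2 * j) : R) * f j *
      ∑ i ∈ range (n - j + 1), ((2 * (n - j)).choose (2 * i) : R) * a ^ (2 * i) := by
  rw [← sum_choose_two_mul_sum_choose_two_mul, show 4 * n = 2 * n + 2 * n by ring, pow_add,
    mul_assoc, hf, mul_sum]
  refine sum_congr rfl fun k hk => ?_
  rw [← hf, show 2 * n = 2 * (n - k) + 2 * k by grind]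
  ring

end Combinatorics

section RademacherSeries

variable {Ω : Type*} [MeasurableSpace Ω] {P : Measure Ω} [IsProbabilityMeasure P]
  {X : ℕ → Ω → ℝ} {r : ℝ}

lemma ae_forall_abs_le_one (hX : ∀ n, Measurable (X n))
    (h1 : ∀ n, P {ω | X n ω = 1} = 1 / 2) (h2 : ∀ n, P {ω | X n ω = -1} = 1 / 2) :
    ∀ᵐ ω ∂P, ∀ t, |X t ω| ≤ 1 :=
  ae_all_iff.2 fun t => (ae_eq_one_or_eq_neg_one (hX t) (h1 t) (h2 t)).mono fun ω h => by
    rcases h with h | h <;> simp [h]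

lemma integral_tailPartialSum_succ_pow_of_rademacher (hX : ∀ n, Measurable (X n))
    (hindep : iIndepFun X P) (h1 : ∀ n, P {ω | X n ω = 1} = 1 / 2)
    (h2 : ∀ n, P {ω | X n ω = -1} = 1 / 2) (hr0 : 0 ≤ r) (hr1 : r < 1) (s N k : ℕ) :
    ∫ ω, tailPartialSum X r s (N + 1) ω ^ k ∂P = r ^ k * ∑ i ∈ range (k + 1), (k.choose i : ℝ) *
      ((∫ ω, tailPartialSum X r (s + 1) N ω ^ i ∂P) * if Even (k - i) then 1 else 0) := by
  simp_rw [integral_tailPartialSum_succ_pow hX hindep (ae_forall_abs_le_one hX h1 h2) hr0 hr1,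
    integral_pow_of_rademacher (hX s) (h1 s) (h2 s)]

lemma integral_tailPartialSum_pow_shift (hX : ∀ n, Measurable (X n))
    (hindep : iIndepFun X P) (h1 : ∀ n, P {ω | X n ω = 1} = 1 / 2)
    (h2 : ∀ n, P {ω | X n ω = -1} = 1 / 2) (hr0 : 0 ≤ r) (hr1 : r < 1) (N s k : ℕ) :
    ∫ ω, tailPartialSum X r s N ω ^ k ∂P = ∫ ω, tailPartialSum X r 0 N ω ^ k ∂P := by
  induction N generalizing s k with
  | zero => simp [tailPartialSum]
  | succ N ih =>
    simp_rw [integral_tailPartialSum_succ_pow_of_rademacher hX hindep h1 h2 hr0 hr1, ih (s + 1),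
      ih (0 + 1)]

lemma integral_tsum_pow (hX : ∀ n, Measurable (X n)) (hindep : iIndepFun X P)
    (h1 : ∀ n, P {ω | X n ω = 1} = 1 / 2) (h2 : ∀ n, P {ω | X n ω = -1} = 1 / 2)
    (hr0 : 0 ≤ r) (hr1 : r < 1) (k : ℕ) :
    ∫ ω, (∑' t, r ^ (t + 1) * X t ω) ^ k ∂P = r ^ k * ∑ i ∈ range (k + 1), (k.choose i : ℝ) *
      ((∫ ω, (∑' t, r ^ (t + 1) * X t ω) ^ i ∂P) * if Even (k - i) then 1 else 0) := by
  have hlim := tendsto_integral_tailPartialSum_pow hX (ae_forall_abs_le_one hX h1 h2) hr0 hr1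
  refine tendsto_nhds_unique ((hlim k).comp (tendsto_add_atTop_nat 1)) ?_
  simp_rw [Function.comp_def,
    integral_tailPartialSum_succ_pow_of_rademacher hX hindep h1 h2 hr0 hr1,
    integral_tailPartialSum_pow_shift hX hindep h1 h2 hr0 hr1 _ (0 + 1)]
  exact ((tendsto_finsetSum _ fun i _ => ((hlim i).mul_const _).const_mul _).const_mul _)

lemma integral_tsum_pow_two_mul (hX : ∀ n, Measurable (X n)) (hindep : iIndepFun X P)
    (h1 : ∀ n, P {ω | X n ω = 1} = 1 / 2) (h2 : ∀ n, P {ω | X n ω = -1} = 1 / 2)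
    (hr0 : 0 ≤ r) (hr1 : r < 1) (k : ℕ) :
    ∫ ω, (∑' t, r ^ (t + 1) * X t ω) ^ (2 * k) ∂P = r ^ (2 * k) * ∑ j ∈ range (k + 1),
      ((2 * k).choose (2 * j) : ℝ) * ∫ ω, (∑' t, r ^ (t + 1) * X t ω) ^ (2 * j) ∂P := by
  rw [integral_tsum_pow hX hindep h1 h2 hr0 hr1, ← sum_range_two_mul_add_one_ite_even fun i =>
    ((2 * k).choose i : ℝ) * ∫ ω, (∑' t, r ^ (t + 1) * X t ω) ^ i ∂P]
  refine congrArg _ (sum_congr rfl fun i hi => ?_)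
  simp only [Nat.even_sub (Nat.lt_succ_iff.1 (mem_range.1 hi)), even_two_mul, true_iff]
  split_ifs <;> ring

end RademacherSeries

/-- `m_(2n)(λ) = (λ^(4n) - 1)⁻¹ ∑_{j=0}^{n-1} C(2n,2j) m_(2j)(λ) ∑_{l=0}^{n-j} C(2(n-j),2l) λ^(2l)`. -/
theorem stmt_5 {Ω : Type*} [MeasurableSpace Ω] (P : Measure Ω) [IsProbabilityMeasure P]
    (X : ℕ → Ω → ℝ) (hmeas : ∀ n, Measurable (X n))
    (hindep : iIndepFun X P)
    (h1 : ∀ n, P {ω | X n ω = 1} = 1 / 2) (h2 : ∀ n, P {ω | X n ω = -1} = 1 / 2)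
    (S : ℝ → Ω → ℝ)
    (hS : ∀ l : ℝ, 1 < l → ∀ ω, S l ω = ∑' n : ℕ, l ^ (-(n + 1 : ℤ)) * X n ω)
    (m : ℝ → ℕ → ℝ) (hm : ∀ l k, m l k = ∫ ω, (S l ω) ^ k ∂P)
    (l : ℝ) (hl : 1 < l) (n : ℕ) (hn : 1 ≤ n) :
    m l (2 * n) = (l ^ (4 * n) - 1)⁻¹ *
      ∑ j ∈ Finset.range n, ((2 * n).choose (2 * j) : ℝ) * m l (2 * j) *
        ∑ i ∈ Finset.range (n - j + 1), ((2 * (n - j)).choose (2 * i) : ℝ) * l ^ (2 * i) := by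
  have hl0 : l ≠ 0 := by positivity
  have hSl : S l = fun ω => ∑' t : ℕ, l⁻¹ ^ (t + 1) * X t ω := by
    funext ω
    simp_rw [hS l hl ω, inv_pow, ← zpow_natCast, ← zpow_neg]
    push_cast
    rfl
  have hrec (k : ℕ) : l ^ (2 * k) * m l (2 * k)
      = ∑ j ∈ range (k + 1), ((2 * k).choose (2 * j) : ℝ) * m l (2 * j) := by
    simp_rw [hm, hSl]
    rw [integral_tsum_pow_two_mul hmeas hindep h1 h2 (by positivity) (inv_lt_one_of_one_lt₀ hl),
      ← mul_assoc, ← mul_pow, mul_inv_cancel₀ hl0, one_pow, one_mul]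
  have hiter := pow_four_mul_mul_eq_of_pow_two_mul_mul_eq hrec n
  rw [sum_range_succ] at hiter
  simp only [Nat.sub_self, Nat.choose_self, mul_zero, zero_add, range_one, sum_singleton,
    pow_zero, Nat.cast_one, one_mul, mul_one] at hiter
  have hpos : 0 < l ^ (4 * n) - 1 := sub_pos.2 (one_lt_pow₀ hl (by omega))
  rw [eq_inv_mul_iff_mul_eq₀ hpos.ne']
  linarith
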